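/- Let n ≥ 1, let d ≥ 2 and let M be a positive integer. If P ∈ K is homogeneous of degree d and every coefficient of P is divisible by M, then P ∈ M·K; equivalently, the polynomial P/M again lies in the ideal K. -/

import Mathlib

open MvPolynomial Finset

/-- `t n i` is the `i`-th elementary symmetric polynomial evaluated at the squares
of the variables, `t_i = s_i(x_1^2, …, x_n^2)`. -/
noncomputable def t (n i : ℕ) : MvPolynomial (Fin n) ℤ :=
  ∑ S ∈ Finset.powersetCard i (Finset.univ : Finset (Fin n)),
    ∏ j ∈ S, (X j : MvPolynomial (Fin n) ℤ) ^ 2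

/-- `K n` is the ideal of `ℤ[x_1, …, x_n]` generated by `t_1, …, t_n`. -/
noncomputable def K (n : ℕ) : Ideal (MvPolynomial (Fin n) ℤ) :=
  Ideal.span ((fun i => t n i) '' (Set.Icc 1 n))

/-!
Let `A = ℤ[t_1, …, t_n] ⊆ ℤ[x_1, …, x_n]`. The point is that `ℤ[x]` is a free `A`-module with a
finite basis `(e_k)`, and that the `t_i` are algebraically independent. Writing `Q = ∑ c_k(t) e_k`
and expanding `P = ∑ g_i t_i` in the same basis, uniqueness of coordinates shows that `M c_k` has
zero constant term; as `ℤ` is torsion-free so has `c_k`, whence `Q ∈ K`.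

Freeness is proved by induction on `n`. Splitting off one variable,
`ℤ[x_0, …, x_n] = ℤ[x_1, …, x_n][X]` and the new generators are `t_{i+1} + t_i X²`, so it suffices
that `1, X, …, X^(2n+1)` is a basis over them. This can be checked with independent variables
`y_1, …, y_n` in place of the `t_i`. There the triangular substitution `y_{i+1} ↦ y_{i+1} + y_i X²`
is an automorphism turning all generators but the last into variables, and the last one, `y_n X²`,
into a polynomial in `X` of degree `2(n+1)` with leading coefficient `±1`; division by that
polynomial produces the basis.
-/

open scoped Polynomial

namespace Polynomial

variable {R : Type*} [CommRing R]

theorem eq_zero_of_sum_comp_mul_X_pow_eq_zero {g : R[X]} (hg : IsUnit g.leadingCoeff) {N : ℕ}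
    (hgN : g.natDegree = N) (hN : 0 < N) {c : Fin N → R[X]}
    (h : ∑ j, (c j).comp g * X ^ (j : ℕ) = 0) (j : Fin N) : c j = 0 := by
  have hdeg : ∀ j, c j ≠ 0 →
      ((c j).comp g * X ^ (j : ℕ)).degree = ((N * (c j).natDegree + j : ℕ) : WithBot ℕ) := by
    intro j hj
    have := Nontrivial.of_polynomial_ne hj
    have hlc : (c j).leadingCoeff * g.leadingCoeff ^ (c j).natDegree ≠ 0 := by
      rw [Ne, (hg.pow _).mul_left_eq_zero]
      exact leadingCoeff_ne_zero.mpr hj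
    have hcomp : (c j).comp g ≠ 0 := fun h0 => hlc <| by
      rw [← coeff_comp_degree_mul_degree (by omega), h0, coeff_zero]
    rw [degree_mul_X_pow, degree_eq_natDegree hcomp, natDegree_comp_eq_of_mul_ne_zero hlc, hgN,
      mul_comm]
    rfl
  -- The degrees of the nonzero summands are distinct, being distinct modulo `N`.
  have hdisj : Set.Pairwise {j | j ∈ univ ∧ (c j).comp g * X ^ (j : ℕ) ≠ 0}
      (fun i k => ((c i).comp g * X ^ (i : ℕ)).degree ≠ ((c k).comp g * X ^ (k : ℕ)).degree) := by
    rintro i ⟨-, hi⟩ k ⟨-, hk⟩ hik hdeg_eq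
    rw [hdeg i (by rintro h0; simp [h0] at hi), hdeg k (by rintro h0; simp [h0] at hk),
      Nat.cast_inj] at hdeg_eq
    have := congrArg (· % N) hdeg_eq
    simp only [Nat.mul_add_mod, Nat.mod_eq_of_lt i.isLt, Nat.mod_eq_of_lt k.isLt] at this
    exact hik (Fin.ext this)
  have hsup := degree_sum_eq_of_disjoint _ univ hdisj
  rw [h, degree_zero, eq_comm, Finset.sup_eq_bot_iff] at hsup
  by_contra hj
  exact WithBot.coe_ne_bot ((hdeg j hj).symm.trans (hsup j (mem_univ j)))

theorem exists_eq_sum_comp_mul_X_pow_of_monic {g : R[X]} (hg : g.Monic) {N : ℕ}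
    (hgN : g.natDegree = N) (hN : 0 < N) (p : R[X]) :
    ∃ c : Fin N → R[X], p = ∑ j, (c j).comp g * X ^ (j : ℕ) := by
  subst hgN
  have := Nontrivial.of_polynomial_ne (show g ≠ 0 by rintro rfl; simp at hN)
  induction h : p.natDegree using Nat.strong_induction_on generalizing p with
  | _ d ih =>
  obtain ⟨q, hq⟩ : ∃ q : Fin g.natDegree → R[X], p /ₘ g = ∑ j, (q j).comp g * X ^ (j : ℕ) := by
    by_cases h0 : p /ₘ g = 0
    · exact ⟨0, by simp [h0]⟩
    have hle : g.natDegree ≤ p.natDegree :=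
      natDegree_le_natDegree ((divByMonic_eq_zero_iff hg).not.mp h0 |> not_lt.mp)
    exact ih _ (by rw [← h, natDegree_divByMonic _ hg]; omega) _ rfl
  have hr : (p %ₘ g).natDegree < g.natDegree :=
    natDegree_modByMonic_lt _ hg (by rintro rfl; simp at hN)
  refine ⟨fun j => C ((p %ₘ g).coeff j) + X * q j, ?_⟩
  conv_lhs => rw [← modByMonic_add_div p g, as_sum_range' _ _ hr, hq, Finset.mul_sum,
    ← Fin.sum_univ_eq_sum_range]
  simp only [add_comp, C_comp, mul_comp, X_comp, add_mul, Finset.sum_add_distrib,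
    ← C_mul_X_pow_eq_monomial]
  exact congrArg _ (Finset.sum_congr rfl fun j _ => by ring)

theorem exists_eq_sum_comp_mul_X_pow {g : R[X]} (hg : IsUnit g.leadingCoeff) {N : ℕ}
    (hgN : g.natDegree = N) (hN : 0 < N) (p : R[X]) :
    ∃ c : Fin N → R[X], p = ∑ j, (c j).comp g * X ^ (j : ℕ) := by
  have hdeg : (hg.unit⁻¹ • g).natDegree = N := by
    rw [Units.smul_def, smul_eq_C_mul, natDegree_C_mul_of_isUnit hg.unit⁻¹.isUnit, hgN]
  obtain ⟨c, rfl⟩ := exists_eq_sum_comp_mul_X_pow_of_monic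
    (monic_of_isUnit_leadingCoeff_inv_smul hg) hdeg hN p
  refine ⟨fun j => (c j).comp (C (↑hg.unit⁻¹ : R) * X), Finset.sum_congr rfl fun j _ => ?_⟩
  rw [comp_assoc, mul_comp, C_comp, X_comp, ← smul_eq_C_mul, ← Units.smul_def]

end Polynomial

section FreeBasis

variable (R : Type*) {S : Type*} [CommRing R] [CommRing S] [Algebra R S] {m : ℕ}

structure IsFreeBasisOver (v : Fin m → S) {ι : Type*} [Fintype ι] (e : ι → S) : Prop where
  exists_eq_sum : ∀ s : S, ∃ c : ι → MvPolynomial (Fin m) R, s = ∑ k, aeval v (c k) * e k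
  eq_zero_of_sum_eq_zero :
    ∀ c : ι → MvPolynomial (Fin m) R, ∑ k, aeval v (c k) * e k = 0 → ∀ k, c k = 0

variable {R} {v : Fin m → S} {ι : Type*} [Fintype ι] {e : ι → S}

theorem IsFreeBasisOver.map {S' : Type*} [CommRing S'] [Algebra R S'] (h : IsFreeBasisOver R v e)
    (φ : S ≃ₐ[R] S') : IsFreeBasisOver R (fun i => φ (v i)) (fun k => φ (e k)) := by
  have hφ : ∀ c : ι → MvPolynomial (Fin m) R,
      ∑ k, aeval (fun i => φ (v i)) (c k) * φ (e k) = φ (∑ k, aeval v (c k) * e k) := fun c => by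
    simp only [map_sum, map_mul, ← AlgHom.comp_apply, ← AlgEquiv.coe_toAlgHom, comp_aeval]
  refine ⟨fun s => ?_, fun c hc => h.eq_zero_of_sum_eq_zero c ?_⟩
  · obtain ⟨c, hc⟩ := h.exists_eq_sum (φ.symm s)
    exact ⟨c, by rw [hφ, ← hc, AlgEquiv.apply_symm_apply]⟩
  · exact φ.injective (by rw [← hφ, hc, map_zero])

theorem aeval_mem_span_range_of_constantCoeff_eq_zero (v : Fin m → S)
    {c : MvPolynomial (Fin m) R} (hc : constantCoeff c = 0) :
    aeval v c ∈ Ideal.span (Set.range v) := by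
  have hX : c ∈ Ideal.span (X '' Set.univ) := mem_ideal_span_X_image.mpr fun i hi => by
    by_contra! h
    obtain rfl : i = 0 := Finsupp.ext fun j => by simpa using h j
    exact (mem_support_iff.mp hi) hc
  rw [Set.image_univ] at hX
  simpa [Ideal.map_span, ← Set.range_comp, Function.comp_def] using
    Ideal.mem_map_of_mem (aeval v) hX

theorem IsFreeBasisOver.mem_span_of_algebraMap_mul_mem (h : IsFreeBasisOver R v e) {a : R}
    (ha : a ∈ nonZeroDivisors R) {s : S} (hs : algebraMap R S a * s ∈ Ideal.span (Set.range v)) :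
    s ∈ Ideal.span (Set.range v) := by
  obtain ⟨c, rfl⟩ := h.exists_eq_sum s
  obtain ⟨g, hg⟩ := Ideal.mem_span_range_iff_exists_fun.mp hs
  choose b hb using fun i => h.exists_eq_sum (g i)
  have hcb : ∀ k, C a * c k - ∑ i, b i k * X i = 0 := by
    refine h.eq_zero_of_sum_eq_zero _ ?_
    simp only [map_sub, map_mul, aeval_C, map_sum, aeval_X, sub_mul, Finset.sum_sub_distrib,
      mul_assoc, ← Finset.mul_sum, ← hg, hb, Finset.sum_mul]
    rw [Finset.sum_comm]
    exact sub_eq_zero.mpr (Finset.sum_congr rfl fun i _ => Finset.sum_congr rfl fun k _ => by ring)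
  refine Ideal.sum_mem _ fun k _ => Ideal.mul_mem_right _ _ ?_
  refine aeval_mem_span_range_of_constantCoeff_eq_zero v ?_
  have := congrArg constantCoeff (sub_eq_zero.mp (hcb k))
  simp only [map_mul, constantCoeff_C, map_sum, constantCoeff_X, mul_zero,
    Finset.sum_const_zero] at this
  exact (mem_nonZeroDivisors_iff.mp ha).1 _ this

end FreeBasis

section AdjoinSq

variable {S : Type*} [CommRing S] {m : ℕ}

/-- For `v = (t_1, …, t_n)`, `pad v j = t_j` with the conventions `t_0 = 1` and `t_j = 0` for
`j > n`. -/
def pad (v : Fin m → S) : ℕ → S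
  | 0 => 1
  | j + 1 => if h : j < m then v ⟨j, h⟩ else 0

@[simp] theorem pad_zero (v : Fin m → S) : pad v 0 = 1 := rfl

@[simp] theorem pad_succ (v : Fin m → S) (i : Fin m) : pad v (i + 1) = v i := by
  simp [pad]

theorem pad_of_lt (v : Fin m → S) {j : ℕ} (hj : m < j) : pad v j = 0 := by
  obtain ⟨j, rfl⟩ := Nat.exists_eq_add_one_of_ne_zero (by omega : j ≠ 0)
  simp [pad, show ¬ j < m by omega]

theorem map_pad {S' : Type*} [CommRing S'] (f : S →+* S') (v : Fin m → S) (j : ℕ) :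
    f (pad v j) = pad (fun i => f (v i)) j := by
  cases j <;> simp only [pad, map_one]; split_ifs <;> simp

/-- If `v` lists the elementary symmetric polynomials in some squares, then `adjoinSq v` lists
them after adjoining one more square `X ^ 2`: `s_{i+1}(y, X²) = s_{i+1}(y) + s_i(y) X²`. -/
noncomputable def adjoinSq (v : Fin m → S) (i : Fin (m + 1)) : S[X] :=
  Polynomial.C (pad v (i + 1)) + Polynomial.C (pad v i) * Polynomial.X ^ 2

theorem aeval_adjoinSq {R : Type*} [CommRing R] [Algebra R S] (v : Fin m → S)
    (p : MvPolynomial (Fin (m + 1)) R) :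
    aeval (adjoinSq v) p =
      Polynomial.mapAlgHom (aeval v) (aeval (adjoinSq (X : Fin m → MvPolynomial (Fin m) R)) p) := by
  rw [comp_aeval_apply]
  congr
  funext i
  simp only [adjoinSq, Polynomial.coe_mapAlgHom, Polynomial.map_add, Polynomial.map_mul,
    Polynomial.map_pow, Polynomial.map_X, Polynomial.map_C]
  simp only [RingHom.coe_coe, map_pad, aeval_X]

end AdjoinSq

section Generic

variable (R : Type*) [CommRing R] (m : ℕ)

/-- `y_j - y_{j-1} X² + y_{j-2} X⁴ - ⋯ + (-1)^j X^(2j)` where `y_j = pad X j`: the preimage of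
`y_j` under `twist`. -/
noncomputable def hornerNegSq : ℕ → (MvPolynomial (Fin m) R)[X]
  | 0 => 1
  | j + 1 => Polynomial.C (pad X (j + 1)) - hornerNegSq j * Polynomial.X ^ 2

noncomputable def twistHom : (MvPolynomial (Fin m) R)[X] →ₐ[R] (MvPolynomial (Fin m) R)[X] :=
  Polynomial.aevalTower (aeval fun i => adjoinSq X i.castSucc) Polynomial.X

noncomputable def untwistHom : (MvPolynomial (Fin m) R)[X] →ₐ[R] (MvPolynomial (Fin m) R)[X] :=
  Polynomial.aevalTower (aeval fun i : Fin m => hornerNegSq R m (i + 1)) Polynomial.X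

theorem twistHom_hornerNegSq {j : ℕ} (hj : j ≤ m) :
    twistHom R m (hornerNegSq R m j) = Polynomial.C (pad X j) := by
  induction j with
  | zero => simp [hornerNegSq]
  | succ j ih =>
    have hpad : pad (X : Fin m → MvPolynomial (Fin m) R) (j + 1) = X ⟨j, hj⟩ := pad_succ _ ⟨j, hj⟩
    rw [hornerNegSq, map_sub, map_mul, map_pow, twistHom, Polynomial.aevalTower_X,
      Polynomial.aevalTower_C, hpad, aeval_X, ← twistHom, ih (by omega), adjoinSq]
    simp [hpad]

theorem untwistHom_C_pad {j : ℕ} (hj : j ≤ m) :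
    untwistHom R m (Polynomial.C (pad X j)) = hornerNegSq R m j := by
  rw [untwistHom, Polynomial.aevalTower_C, ← AlgHom.coe_toRingHom, map_pad]
  cases j with
  | zero => simp [hornerNegSq]
  | succ j => simp [pad, show j < m by omega]

noncomputable def twist : (MvPolynomial (Fin m) R)[X] ≃ₐ[R] (MvPolynomial (Fin m) R)[X] :=
  AlgEquiv.ofAlgHom (twistHom R m) (untwistHom R m)
    (by
      ext i : 2
      · simp [untwistHom, twistHom_hornerNegSq R m (show (i : ℕ) + 1 ≤ m by omega)]
      · simp [twistHom, untwistHom])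
    (by
      ext i : 2
      · change untwistHom R m (twistHom R m (Polynomial.C (X i))) = Polynomial.C (X i)
        rw [twistHom, Polynomial.aevalTower_C, aeval_X, adjoinSq, map_add, map_mul, map_pow,
          Fin.val_castSucc, untwistHom_C_pad R m i.isLt, untwistHom_C_pad R m i.isLt.le,
          untwistHom, Polynomial.aevalTower_X, hornerNegSq.eq_2, pad_succ, sub_add_cancel]
      · simp [twistHom, untwistHom])

theorem twist_X : twist R m Polynomial.X = Polynomial.X := Polynomial.aevalTower_X _ _

theorem twist_hornerNegSq_mul_X_sq :
    twist R m (hornerNegSq R m m * Polynomial.X ^ 2) = adjoinSq X (Fin.last m) := by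
  change twistHom R m _ = _
  rw [map_mul, map_pow, twistHom, Polynomial.aevalTower_X, ← twistHom,
    twistHom_hornerNegSq R m le_rfl, adjoinSq, Fin.val_last, pad_of_lt _ (by omega : m < m + 1),
    map_zero, zero_add]

noncomputable def lastVarEquiv : MvPolynomial (Fin (m + 1)) R ≃ₐ[R] (MvPolynomial (Fin m) R)[X] :=
  (renameEquiv R finSuccEquivLast).trans (optionEquivLeft R (Fin m))

theorem aeval_adjoinSq_X (p : MvPolynomial (Fin (m + 1)) R) :
    aeval (adjoinSq X) p =
      twist R m ((lastVarEquiv R m p).comp (hornerNegSq R m m * Polynomial.X ^ 2)) := by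
  induction p using MvPolynomial.induction_on with
  | C a =>
    rw [← algebraMap_eq, AlgHom.commutes, AlgEquiv.commutes, Polynomial.algebraMap_apply,
      Polynomial.C_comp, ← Polynomial.algebraMap_apply, AlgEquiv.commutes]
  | add p q hp hq => simp only [map_add, Polynomial.add_comp, hp, hq]
  | mul_X p i ih =>
    rw [map_mul, ih, map_mul, Polynomial.mul_comp, map_mul, aeval_X]
    congr 1
    induction i using Fin.lastCases with
    | last => simp [lastVarEquiv, finSuccEquivLast_last, twist_hornerNegSq_mul_X_sq]
    | cast i => simp [lastVarEquiv, finSuccEquivLast_castSucc, twist, twistHom]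

variable [Nontrivial R]

theorem degree_hornerNegSq (j : ℕ) : (hornerNegSq R m j).degree = ((2 * j : ℕ) : WithBot ℕ) := by
  induction j with
  | zero => simp [hornerNegSq]
  | succ j ih =>
    have hX2 : (hornerNegSq R m j * Polynomial.X ^ 2).degree = ((2 * (j + 1) : ℕ) : WithBot ℕ) := by
      rw [Polynomial.degree_mul_X_pow, ih, ← Nat.cast_add]
      ring_nf
    rw [hornerNegSq.eq_2, Polynomial.degree_sub_eq_right_of_degree_lt, hX2]
    exact hX2 ▸ Polynomial.degree_C_le.trans_lt (by exact_mod_cast (by omega : 0 < 2 * (j + 1)))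

theorem leadingCoeff_hornerNegSq (j : ℕ) : (hornerNegSq R m j).leadingCoeff = (-1) ^ j := by
  induction j with
  | zero => simp [hornerNegSq]
  | succ j ih =>
    have hlt : (Polynomial.C (pad (X : Fin m → MvPolynomial (Fin m) R) (j + 1))).degree <
        (hornerNegSq R m j * Polynomial.X ^ 2).degree := by
      rw [Polynomial.degree_mul_X_pow, degree_hornerNegSq]
      exact Polynomial.degree_C_le.trans_lt (by exact_mod_cast (by omega : 0 < 2 * j + 2))
    rw [hornerNegSq.eq_2, sub_eq_add_neg, Polynomial.leadingCoeff_add_of_degree_lt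
      (by rwa [Polynomial.degree_neg]), Polynomial.leadingCoeff_neg,
      Polynomial.leadingCoeff_mul_X_pow, ih, pow_succ, mul_neg_one]

theorem isFreeBasisOver_adjoinSq_X :
    IsFreeBasisOver R (adjoinSq (X : Fin m → MvPolynomial (Fin m) R))
      (fun j : Fin (2 * (m + 1)) => Polynomial.X ^ (j : ℕ)) := by
  set g := hornerNegSq R m m * Polynomial.X ^ 2
  have hdeg : g.natDegree = 2 * (m + 1) := by
    refine Polynomial.natDegree_eq_of_degree_eq_some ?_
    rw [Polynomial.degree_mul_X_pow, degree_hornerNegSq, ← Nat.cast_add]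
    ring_nf
  have hlc : IsUnit g.leadingCoeff := by
    rw [Polynomial.leadingCoeff_mul_X_pow, leadingCoeff_hornerNegSq]
    exact isUnit_neg_one.pow m
  have hsum : ∀ c : Fin (2 * (m + 1)) → MvPolynomial (Fin (m + 1)) R,
      ∑ j, aeval (adjoinSq X) (c j) * Polynomial.X ^ (j : ℕ) =
        twist R m (∑ j, (lastVarEquiv R m (c j)).comp g * Polynomial.X ^ (j : ℕ)) := fun c => by
    simp only [map_sum, map_mul, map_pow, twist_X]
    exact Finset.sum_congr rfl fun j _ => by rw [aeval_adjoinSq_X]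
  refine ⟨fun p => ?_, fun c hc j => ?_⟩
  · obtain ⟨q, hq⟩ :=
      Polynomial.exists_eq_sum_comp_mul_X_pow hlc hdeg (by omega) ((twist R m).symm p)
    refine ⟨fun j => (lastVarEquiv R m).symm (q j), ?_⟩
    simp only [hsum, AlgEquiv.apply_symm_apply, ← hq]
  · rw [hsum, map_eq_zero_iff _ (twist R m).injective] at hc
    simpa using Polynomial.eq_zero_of_sum_comp_mul_X_pow_eq_zero hlc hdeg (by omega) hc j

end Generic

section BaseChange

variable {R S : Type*} [CommRing R] [CommRing S] [Algebra R S] {m : ℕ} {v : Fin m → S}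
  {ι : Type*} [Fintype ι] {e : ι → S}

theorem IsFreeBasisOver.exists_eq_sum_mapAlgHom_mul_C (h : IsFreeBasisOver R v e) (p : S[X]) :
    ∃ G : ι → (MvPolynomial (Fin m) R)[X],
      p = ∑ i, Polynomial.mapAlgHom (aeval v) (G i) * Polynomial.C (e i) := by
  choose a ha using fun d => h.exists_eq_sum (p.coeff d)
  refine ⟨fun i => ∑ d ∈ Finset.range (p.natDegree + 1), Polynomial.monomial d (a d i), ?_⟩
  ext d
  by_cases hd : d < p.natDegree + 1
  · simp [Polynomial.finsetSum_coeff, Polynomial.coeff_mul_C, Polynomial.coeff_monomial, hd, ha]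
  · simp [Polynomial.finsetSum_coeff, Polynomial.coeff_mul_C, Polynomial.coeff_monomial, hd,
      Polynomial.coeff_eq_zero_of_natDegree_lt (by omega : p.natDegree < d)]

theorem IsFreeBasisOver.eq_zero_of_sum_mapAlgHom_mul_C_eq_zero (h : IsFreeBasisOver R v e)
    {G : ι → (MvPolynomial (Fin m) R)[X]}
    (hG : ∑ i, Polynomial.mapAlgHom (aeval v) (G i) * Polynomial.C (e i) = 0) (i : ι) :
    G i = 0 := by
  ext d
  have := congrArg (Polynomial.coeff · d) hG
  simp only [Polynomial.finsetSum_coeff, Polynomial.coeff_mul_C, Polynomial.coe_mapAlgHom,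
    Polynomial.coeff_map, Polynomial.coeff_zero] at this
  rw [h.eq_zero_of_sum_eq_zero _ this i, Polynomial.coeff_zero]

theorem IsFreeBasisOver.polynomial [Nontrivial R] (h : IsFreeBasisOver R v e) :
    IsFreeBasisOver R (adjoinSq v)
      (fun k : ι × Fin (2 * (m + 1)) => Polynomial.C (e k.1) * Polynomial.X ^ (k.2 : ℕ)) := by
  have hgen := isFreeBasisOver_adjoinSq_X R m
  have hsum : ∀ c : ι × Fin (2 * (m + 1)) → MvPolynomial (Fin (m + 1)) R,
      ∑ k, aeval (adjoinSq v) (c k) * (Polynomial.C (e k.1) * Polynomial.X ^ (k.2 : ℕ)) =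
        ∑ i, Polynomial.mapAlgHom (aeval v)
          (∑ j, aeval (adjoinSq (X : Fin m → MvPolynomial (Fin m) R)) (c (i, j)) *
            Polynomial.X ^ (j : ℕ)) * Polynomial.C (e i) := by
    intro c
    rw [Fintype.sum_prod_type]
    refine Finset.sum_congr rfl fun i _ => ?_
    rw [map_sum, Finset.sum_mul]
    refine Finset.sum_congr rfl fun j _ => ?_
    rw [aeval_adjoinSq, map_mul, map_pow, Polynomial.coe_mapAlgHom, Polynomial.map_X]
    ring
  refine ⟨fun p => ?_, fun c hc k => ?_⟩
  · obtain ⟨G, rfl⟩ := h.exists_eq_sum_mapAlgHom_mul_C p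
    choose b hb using fun i => hgen.exists_eq_sum (G i)
    exact ⟨fun k => b k.1 k.2, by rw [hsum]; simp only [← hb]⟩
  · rw [hsum] at hc
    exact hgen.eq_zero_of_sum_eq_zero _ (h.eq_zero_of_sum_mapAlgHom_mul_C_eq_zero hc k.1) k.2

end BaseChange

theorem isFreeBasisOver_X (R : Type*) [CommRing R] (m : ℕ) :
    IsFreeBasisOver R (X : Fin m → MvPolynomial (Fin m) R) (fun _ : Unit => 1) :=
  ⟨fun s => ⟨fun _ => s, by simp⟩, fun c hc k => by simpa using hc⟩

theorem Multiset.esymm_cons_succ {R : Type*} [CommSemiring R] (a : R) (s : Multiset R) (j : ℕ) :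
    (a ::ₘ s).esymm (j + 1) = s.esymm (j + 1) + a * s.esymm j := by
  simp [Multiset.esymm, Multiset.powersetCard_cons, Multiset.sum_map_mul_left]

section SquaresOfVariables

variable (n : ℕ)

theorem map_t {A F : Type*} [CommRing A] [FunLike F (MvPolynomial (Fin n) ℤ) A]
    [RingHomClass F (MvPolynomial (Fin n) ℤ) A] (φ : F) (i : ℕ) :
    φ (t n i) = (List.ofFn fun j => φ (X j) ^ 2 : Multiset A).esymm i := by
  rw [t, map_sum, ← Fin.univ_val_map, Finset.esymm_map_val]
  simp [map_prod, map_pow]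

theorem finSuccEquiv_t_succ (j : ℕ) :
    finSuccEquiv ℤ n (t (n + 1) (j + 1)) =
      Polynomial.C (t n (j + 1)) + Polynomial.C (t n j) * Polynomial.X ^ 2 := by
  rw [map_t, List.ofFn_succ, ← Multiset.cons_coe, Multiset.esymm_cons_succ, map_t n Polynomial.C,
    map_t n Polynomial.C]
  simp [finSuccEquiv_X_zero, finSuccEquiv_X_succ, mul_comm]

theorem t_zero : t n 0 = 1 := by
  simp [t]

theorem t_of_lt {j : ℕ} (hj : n < j) : t n j = 0 := by
  rw [t, Finset.powersetCard_eq_empty.mpr (by simpa using hj), Finset.sum_empty]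

noncomputable def tVec : Fin n → MvPolynomial (Fin n) ℤ := fun i => t n (i + 1)

theorem pad_tVec (j : ℕ) : pad (tVec n) j = t n j := by
  rcases j with _ | j
  · rw [pad_zero, t_zero]
  · by_cases hj : j < n
    · exact pad_succ (tVec n) ⟨j, hj⟩
    · rw [pad_of_lt _ (by omega), t_of_lt n (by omega)]

theorem K_eq_span_range_tVec : K n = Ideal.span (Set.range (tVec n)) := by
  rw [K]
  congr 1
  ext f
  constructor
  · rintro ⟨i, ⟨hi1, hin⟩, rfl⟩
    exact ⟨⟨i - 1, by omega⟩, by simp [tVec, show i - 1 + 1 = i by omega]⟩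
  · rintro ⟨i, rfl⟩
    exact ⟨i + 1, ⟨by omega, by omega⟩, rfl⟩

theorem finSuccEquiv_symm_adjoinSq_tVec (i : Fin (n + 1)) :
    (finSuccEquiv ℤ n).symm (adjoinSq (tVec n) i) = tVec (n + 1) i := by
  rw [AlgEquiv.symm_apply_eq, tVec, finSuccEquiv_t_succ, adjoinSq, pad_tVec, pad_tVec]

theorem exists_isFreeBasisOver_tVec :
    ∃ (ι : Type) (_ : Fintype ι) (e : ι → MvPolynomial (Fin n) ℤ),
      IsFreeBasisOver ℤ (tVec n) e := by
  induction n with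
  | zero =>
    exact ⟨Unit, inferInstance, _, (funext fun i => i.elim0 : tVec 0 = X) ▸ isFreeBasisOver_X ℤ 0⟩
  | succ n ih =>
    obtain ⟨ι, _, e, he⟩ := ih
    have h := he.polynomial.map (finSuccEquiv ℤ n).symm
    simp only [finSuccEquiv_symm_adjoinSq_tVec] at h
    exact ⟨_, inferInstance, _, h⟩

end SquaresOfVariables

theorem stmt1_general (n : ℕ)
    (M : ℕ) (hM : 0 < M)
    (P : MvPolynomial (Fin n) ℤ) (hPK : P ∈ K n)
    (hdvd : (C (M : ℤ) : MvPolynomial (Fin n) ℤ) ∣ P) :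
    ∃ Q ∈ K n, P = (C (M : ℤ) : MvPolynomial (Fin n) ℤ) * Q := by
  obtain ⟨Q, rfl⟩ := hdvd
  obtain ⟨ι, _, e, he⟩ := exists_isFreeBasisOver_tVec n
  rw [K_eq_span_range_tVec] at hPK ⊢
  exact ⟨Q, he.mem_span_of_algebraMap_mul_mem
    (mem_nonZeroDivisors_of_ne_zero (by exact_mod_cast hM.ne')) hPK, rfl⟩

theorem stmt1 (n : ℕ) (hn : 1 ≤ n) (d : ℕ) (hd : 2 ≤ d)
    (M : ℕ) (hM : 0 < M)
    (P : MvPolynomial (Fin n) ℤ) (hPK : P ∈ K n) (hhom : P.IsHomogeneous d)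
    (hdvd : (C (M : ℤ) : MvPolynomial (Fin n) ℤ) ∣ P) :
    ∃ Q ∈ K n, P = (C (M : ℤ) : MvPolynomial (Fin n) ℤ) * Q :=
  stmt1_general n M hM P hPK hdvd
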